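/- Bitwise characterization of resetting the rightmost set bit: for every natural number n with n ≠ 0 and every index i, the i-th bit of n &&& (n - 1) is set if and only if the i-th bit of n is set and i ≠ padicValNat 2 n. Formally: ∀ i, (n &&& (n - 1)).testBit i ↔ (n.testBit i ∧ i ≠ padicValNat 2 n). -/
import Mathlib

/-- Bitwise characterization of resetting the rightmost set bit: for nonzero `n`,
the `i`-th bit of `n &&& (n - 1)` is set iff the `i`-th bit of `n` is set and
`i` is not the position of the rightmost 1-bit of `n`. -/
theorem testBit_and_pred (n : ℕ) (hn : n ≠ 0) :
    ∀ i, (n &&& (n - 1)).testBit i ↔ (n.testBit i ∧ i ≠ padicValNat 2 n) := by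
  obtain ⟨m, hm⟩ : 2 ^ padicValNat 2 n ∣ n := pow_padicValNat_dvd
  have hmodd : ¬ 2 ∣ m := by
    intro ⟨q, hq⟩
    exact pow_succ_padicValNat_not_dvd (p := 2) hn ⟨q, by nth_rewrite 1 [hm]; rw [hq]; ring⟩
  obtain ⟨q, hq⟩ : ∃ q, m = 2 * q + 1 := ⟨m / 2, by omega⟩
  set k := padicValNat 2 n with hk
  have hn1 : n = 2 ^ (k + 1) * q + 2 ^ k := by rw [hm, hq]; ring
  have hn2 : n - 1 = 2 ^ (k + 1) * q + (2 ^ k - 1) := by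
    have : (1:ℕ) ≤ 2 ^ k := Nat.one_le_two_pow
    omega
  intro i
  rw [Nat.testBit_and, hn2, hn1,
    Nat.testBit_two_pow_mul_add q (Nat.pow_lt_pow_succ one_lt_two) i,
    Nat.testBit_two_pow_mul_add q (by have := Nat.pow_lt_pow_succ (a := 2) (n := k) one_lt_two; omega) i,
    Nat.testBit_two_pow, Nat.testBit_two_pow_sub_one]
  by_cases h : i < k + 1
  · simp only [if_pos h, Bool.and_eq_true, decide_eq_true_eq, ne_eq]
    omega
  · simp only [if_neg h, Bool.and_self, ne_eq, iff_self_and]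
    intro _; omega
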